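/- The axiom (wCD): □(p∨q) → ((◇p → □q) → □q) is valid in every frame (with no confluence condition required). -/
import Mathlib


inductive Fml : Type
  | atom : ℕ → Fml
  | impl : Fml → Fml → Fml
  | top : Fml
  | bot : Fml
  | and : Fml → Fml → Fml
  | or : Fml → Fml → Fml
  | box : Fml → Fml
  | dia : Fml → Fml
deriving DecidableEq

/-- number of constructors (symbols) in a formula -/
def Fml.len : Fml → ℕ
  | atom _ => 1
  | impl A B => A.len + B.len + 1
  | top => 1
  | bot => 1
  | and A B => A.len + B.len + 1
  | or A B => A.len + B.len + 1
  | box A => A.len + 1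
  | dia A => A.len + 1

/-- a set of formulas is closed under immediate subformulas -/
def ClosedSet (S : Set Fml) : Prop :=
  (∀ A B, Fml.impl A B ∈ S → A ∈ S ∧ B ∈ S) ∧
  (∀ A B, Fml.and A B ∈ S → A ∈ S ∧ B ∈ S) ∧
  (∀ A B, Fml.or A B ∈ S → A ∈ S ∧ B ∈ S) ∧
  (∀ A, Fml.box A ∈ S → A ∈ S) ∧
  (∀ A, Fml.dia A ∈ S → A ∈ S)

/-- Σ_A : the least closed set of formulas containing A -/
def Sig (A : Fml) : Set Fml := ⋂₀ {S | ClosedSet S ∧ A ∈ S}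

/-- Γ° = ⋃ {Σ_B : □B ∈ Γ or ◇B ∈ Γ} -/
def circSet (Γ : Set Fml) : Set Fml :=
  ⋃ B ∈ {B : Fml | Fml.box B ∈ Γ ∨ Fml.dia B ∈ Γ}, Sig B

/-- iterates Γ^α : Γ^0 = Γ, Γ^{α+1} = (Γ^α)° -/
def iterCirc (Γ : Set Fml) : ℕ → Set Fml
  | 0 => Γ
  | n + 1 => circSet (iterCirc Γ n)

/-- intuitionistic modal satisfaction (the paper's clauses) -/
def Sat {W : Type} (le R : W → W → Prop) (V : ℕ → W → Prop) : Fml → W → Prop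
  | .atom p, s => V p s
  | .impl A B, s => ∀ t, le s t → Sat le R V A t → Sat le R V B t
  | .top, _ => True
  | .bot, _ => False
  | .and A B, s => Sat le R V A s ∧ Sat le R V B s
  | .or A B, s => Sat le R V A s ∨ Sat le R V B s
  | .box A, s => ∀ t, le s t → ∀ u, R t u → Sat le R V A u
  | .dia A, s => ∃ t, le t s ∧ ∃ u, R t u ∧ Sat le R V A u

/-- le is a preorder -/
def IsPre {W : Type} (le : W → W → Prop) : Prop :=
  (∀ s, le s s) ∧ (∀ s t u, le s t → le t u → le s u)

/-- each V p is ≤-closed -/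
def VClosed {W : Type} (le : W → W → Prop) (V : ℕ → W → Prop) : Prop :=
  ∀ p s t, V p s → le s t → V p t

def FwdConf {W : Type} (le R : W → W → Prop) : Prop :=
  ∀ s t u, le t s → R t u → ∃ v, R s v ∧ le u v

def DownConf {W : Type} (le R : W → W → Prop) : Prop :=
  ∀ s t u, le s t → R t u → ∃ v, R s v ∧ le v u

def UpConf {W : Type} (le R : W → W → Prop) : Prop :=
  ∀ s t u, R s t → le u t → ∃ v, le v s ∧ R v u

/-- validity in a frame: true at all worlds under all valuations -/
def ValidIn {W : Type} (le R : W → W → Prop) (A : Fml) : Prop :=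
  ∀ V : ℕ → W → Prop, VClosed le V → ∀ s, Sat le R V A s

/-- (wCD): □(p∨q) → ((◇p → □q) → □q) -/
theorem axiom_wCD_valid {W : Type} (le R : W → W → Prop)
    (hpre : IsPre le) (p q : ℕ) :
    ValidIn le R (Fml.impl (Fml.box (Fml.or (Fml.atom p) (Fml.atom q)))
      (Fml.impl (Fml.impl (Fml.dia (Fml.atom p)) (Fml.box (Fml.atom q)))
        (Fml.box (Fml.atom q)))) := by
  
  intro V hV s
  intro t hst hbox t' htt' himp u ht'u v huv
  have hle_tu : le t u := hpre.2 _ _ _ htt' ht'u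
  have hpq := hbox u hle_tu v huv
  cases hpq with
  | inr hq => exact hq
  | inl hp =>
    have hdia : Sat le R V (Fml.dia (Fml.atom p)) u :=
      ⟨u, hpre.1 u, v, huv, hp⟩
    exact himp u ht'u hdia u (hpre.1 u) v huv
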